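/- arXiv:0908.1630 — 5 statements merged into one kernel-verified Lean document; each statement's English description precedes it below -/
import Mathlib

section
/- For positive integers $n,k$ and a strictly increasing sequence $0 \le m_1 < m_2 < \cdots < m_k \le n+k-1$, the determinant $\det_{1\le i,j\le k}\big(q^{(m_j-i+1)(m_j-i)/2}\binom{n}{m_j-i+1}_q\big)$ equals $q^{\binom{k+1}{3}+\frac{1}{2}\sum_{i=1}^k m_i(m_i-2k+1)} \prod_{1\le i<j\le k}(q^{m_i}-q^{m_j}) \prod_{i=1}^k \frac{[n+k-i]_q!}{[m_i]_q!\,[n+k-m_i-1]_q!}$, where $[a]_q!=\prod_{i=1}^a(1-q^i)$, $\binom{a}{b}_q = [a]_q!/([b]_q![a-b]_q!)$ for $0\le b\le a$ and $\binom{a}{b}_q=0$ otherwise. -/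
open Finset

/-- The `q`-factorial `[a]_q! = ∏_{i=1}^a (1 - q^i)`. -/
noncomputable def qfact (q : ℝ) (a : ℕ) : ℝ := ∏ i ∈ Finset.Icc 1 a, (1 - q ^ i)

/-- The `q`-binomial coefficient, zero when `b < 0` or `b > a`. -/
noncomputable def qbinom (q : ℝ) (a : ℕ) (b : ℤ) : ℝ :=
  if 0 ≤ b ∧ b ≤ a then qfact q a / (qfact q b.toNat * qfact q (a - b.toNat)) else 0

/-!
Up to a factor depending only on the row and one depending only on the column, the entry in
row `i` and column `j` is `P_i(q^{m_j})`, where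
`P_i(x) = ∏_{s<i} (x - q^s) ∏_{i<s<k} (x - q^{n+s})` has degree `k - 1`. Hence the determinant is
the Vandermonde determinant of the nodes `q^{m_j}` times the determinant of the coefficient matrix
of the `P_i`. The latter is found by evaluating at the nodes `q^0, …, q^{k-1}` instead, where the
matrix `(P_i(q^j))` is triangular with diagonal `∏_{s<i} (q^i - q^s) ∏_{i<s<k} (q^i - q^{n+s})`.
-/

open Polynomial Matrix

section QFactorial

variable {q : ℝ}

lemma qfact_ne_zero (hq : 0 < q) (hq1 : q ≠ 1) (a : ℕ) : qfact q a ≠ 0 :=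
  prod_ne_zero_iff.2 fun t ht => sub_ne_zero.2 fun h =>
    hq1 ((pow_eq_one_iff_of_nonneg hq.le (by rw [mem_Icc] at ht; omega)).1 h.symm)

lemma qfact_mul_prod_Ioc {a b : ℕ} (h : a ≤ b) :
    qfact q a * ∏ t ∈ Ioc a b, (1 - q ^ t) = qfact q b :=
  prod_Ioc_consecutive _ (Nat.zero_le a) h

lemma qfact_mul_prod_range_pow_sub_pow {a i : ℕ} (h : i ≤ a) :
    qfact q (a - i) * ∏ s ∈ range i, (q ^ a - q ^ s)
      = (-1) ^ i * q ^ i.choose 2 * qfact q a := by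
  have hfactor : ∀ s ∈ range i, q ^ a - q ^ s = -(q ^ s * (1 - q ^ (a - s))) := fun s hs => by
    rw [mem_range] at hs
    rw [mul_sub, ← pow_add, Nat.add_sub_cancel' (by omega)]; ring
  have hreflect : ∏ s ∈ range i, (1 - q ^ (a - s)) = ∏ t ∈ Ioc (a - i) a, (1 - q ^ t) := by
    refine prod_nbij' (a - ·) (a - ·) ?_ ?_ ?_ ?_ ?_ <;> intro x hx <;>
      simp only [mem_range, mem_Ioc] at * <;> omega
  rw [prod_congr rfl hfactor, prod_neg, prod_mul_distrib, prod_pow_eq_pow_sum, card_range,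
    hreflect, sum_range_id, ← Nat.choose_two_right, ← qfact_mul_prod_Ioc (Nat.sub_le a i)]
  ring

lemma qfact_mul_prod_Ioo_pow_sub_pow {n k a i : ℕ} (h : a ≤ n + i) (hik : i < k) :
    qfact q (n + i - a) * ∏ s ∈ Ioo i k, (q ^ a - q ^ (n + s))
      = q ^ (a * (k - i - 1)) * qfact q (n + k - a - 1) := by
  have hfactor : ∀ s ∈ Ioo i k, q ^ a - q ^ (n + s) = q ^ a * (1 - q ^ (n + s - a)) :=
    fun s hs => by
      rw [mem_Ioo] at hs
      rw [mul_sub, ← pow_add, Nat.add_sub_cancel' (by omega), mul_one]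
  have hshift : ∏ s ∈ Ioo i k, (1 - q ^ (n + s - a))
      = ∏ t ∈ Ioc (n + i - a) (n + k - a - 1), (1 - q ^ t) := by
    refine prod_nbij' (n + · - a) (· + a - n) ?_ ?_ ?_ ?_ ?_ <;> intro x hx <;>
      simp only [mem_Ioo, mem_Ioc] at * <;> omega
  rw [prod_congr rfl hfactor, prod_mul_distrib, prod_const, Nat.card_Ioo, ← pow_mul, hshift,
    mul_left_comm, qfact_mul_prod_Ioc (by omega)]

end QFactorial

section RowPolynomials

variable {R : Type*} [CommRing R] {k : ℕ}

theorem Matrix.det_of_eval_eq_det_coeff_mul_det_vandermonde (p : Fin k → R[X])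
    (hp : ∀ i, (p i).natDegree < k) (v : Fin k → R) :
    det (of fun i j => (p i).eval (v j))
      = det (of fun i j : Fin k => (p i).coeff j) * det (vandermonde v) := by
  rw [← det_transpose (vandermonde v), ← det_mul]
  congr 1
  ext i j
  simp only [of_apply, mul_apply, transpose_apply, vandermonde_apply]
  rw [eval_eq_sum_range' (hp i), ← Fin.sum_univ_eq_sum_range (fun s => (p i).coeff s * v j ^ s)]

lemma prod_filter_fst_lt_snd {M : Type*} [CommMonoid M] (f : Fin k → Fin k → M) :
    ∏ p ∈ univ.filter (fun p : Fin k × Fin k => p.1 < p.2), f p.1 p.2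
      = ∏ i, ∏ j ∈ Ioi i, f i j := by
  rw [prod_filter, Fintype.prod_prod_type]
  refine prod_congr rfl fun i _ => ?_
  rw [← prod_filter]
  congr 1
  ext j
  simp

theorem Matrix.det_vandermonde_eq_neg_one_pow_mul (v : Fin k → R) :
    det (vandermonde v)
      = (-1) ^ k.choose 2 * ∏ p ∈ univ.filter (fun p : Fin k × Fin k => p.1 < p.2),
          (v p.1 - v p.2) := by
  have hcard : #(univ.filter fun p : Fin k × Fin k => p.1 < p.2) = k.choose 2 := by
    simpa using Fintype.card_product_filter_lt (α := Fin k)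
  rw [← hcard, ← prod_neg, det_vandermonde, prod_filter_fst_lt_snd (fun i j => -(v i - v j))]
  simp only [neg_sub]

lemma prod_neg_one_pow_val : ∏ i : Fin k, (-1 : R) ^ (i : ℕ) = (-1) ^ k.choose 2 := by
  rw [prod_pow_eq_pow_sum, Fin.sum_univ_eq_sum_range (fun i => i) k, sum_range_id,
    Nat.choose_two_right]

variable (q : R) (n : ℕ)

noncomputable def rowPoly (k i : ℕ) : R[X] :=
  (∏ s ∈ range i, (X - C (q ^ s))) * ∏ s ∈ Ioo i k, (X - C (q ^ (n + s)))

@[simp]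
lemma eval_rowPoly (i : ℕ) (x : R) :
    (rowPoly q n k i).eval x
      = (∏ s ∈ range i, (x - q ^ s)) * ∏ s ∈ Ioo i k, (x - q ^ (n + s)) := by
  simp only [rowPoly, eval_mul, eval_prod, eval_sub, eval_X, eval_C]

lemma natDegree_rowPoly_lt [Nontrivial R] {i : ℕ} (hik : i < k) :
    (rowPoly q n k i).natDegree < k := by
  rw [rowPoly, (monic_prod_of_monic _ _ fun s _ => monic_X_sub_C _).natDegree_mul
    (monic_prod_of_monic _ _ fun s _ => monic_X_sub_C _),
    natDegree_prod_of_monic _ _ fun s _ => monic_X_sub_C _,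
    natDegree_prod_of_monic _ _ fun s _ => monic_X_sub_C _]
  simp only [natDegree_X_sub_C, sum_const, card_range, Nat.card_Ioo, smul_eq_mul, mul_one]
  omega

lemma eval_rowPoly_pow_of_lt {i a : ℕ} (h : a < i) : (rowPoly q n k i).eval (q ^ a) = 0 := by
  rw [eval_rowPoly]
  exact mul_eq_zero_of_left (prod_eq_zero (mem_range.2 h) (sub_self _)) _

lemma eval_rowPoly_pow_of_mem_Ioo {i a : ℕ} (h : a ∈ Ioo i k) :
    (rowPoly q n k i).eval (q ^ (n + a)) = 0 := by
  rw [eval_rowPoly]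
  exact mul_eq_zero_of_right _ (prod_eq_zero h (sub_self _))

theorem det_eval_rowPoly [IsDomain R] (hq : Function.Injective (q ^ · : ℕ → R))
    (v : Fin k → R) :
    det (of fun i j : Fin k => (rowPoly q n k i).eval (v j))
      = (∏ i : Fin k, ∏ s ∈ Ioo (i : ℕ) k, (q ^ (i : ℕ) - q ^ (n + s)))
        * det (vandermonde v) := by
  have hdeg i : (rowPoly q n k (i : Fin k)).natDegree < k := natDegree_rowPoly_lt q n i.isLt
  set w : Fin k → R := fun j => q ^ (j : ℕ)
  have htriangular : det (of fun i j : Fin k => (rowPoly q n k i).eval (w j))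
      = det (vandermonde w)
        * ∏ i : Fin k, ∏ s ∈ Ioo (i : ℕ) k, (q ^ (i : ℕ) - q ^ (n + s)) := by
    have hupper : (of fun i j : Fin k => (rowPoly q n k i).eval (w j)).IsUpperTriangular :=
      fun i j (hji : j < i) => eval_rowPoly_pow_of_lt q n (Fin.lt_def.1 hji)
    rw [det_of_isUpperTriangular hupper, det_vandermonde,
      prod_comm' (t' := (univ : Finset (Fin k))) (s' := fun j : Fin k => Iio j) (by simp)]
    simp only [of_apply, eval_rowPoly, w, ← prod_mul_distrib]
    refine prod_congr rfl fun i _ => ?_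
    rw [← Nat.Iio_eq_range, ← Fin.map_valEmbedding_Iio, prod_map]
    rfl
  have hw : det (vandermonde w) ≠ 0 :=
    det_vandermonde_ne_zero_iff.2 fun i j h => Fin.val_injective (hq h)
  rw [det_of_eval_eq_det_coeff_mul_det_vandermonde _ hdeg] at htriangular ⊢
  rw [mul_comm _ (det (vandermonde w))] at htriangular
  rw [mul_left_cancel₀ hw htriangular]

end RowPolynomials

section Exponents

lemma Int.natCast_choose_two (i : ℕ) : (i.choose 2 : ℤ) = i * (i - 1) / 2 := by
  rcases i with _ | i
  · rfl
  · rw [Nat.choose_two_right, Int.natCast_div]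
    push_cast
    ring_nf

lemma Int.even_mul_sub_two_mul_add_one (a k : ℤ) : Even (a * (a - 2 * k + 1)) := by
  rw [Int.even_mul, Int.even_add_one, Int.even_sub]
  simpa [parity_simps] using Int.even_or_odd a

lemma Int.sub_mul_sub_sub_one_ediv_two (a i k : ℤ) :
    (a - i) * (a - i - 1) / 2
      = a * (a - 2 * k + 1) / 2 + i + i * (i - 1) / 2 + a * (k - i - 1) := by
  have hleft := Int.two_mul_ediv_two_of_even (Int.even_mul_pred_self (a - i))
  have hcol := Int.two_mul_ediv_two_of_even (Int.even_mul_sub_two_mul_add_one a k)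
  have hrow := Int.two_mul_ediv_two_of_even (Int.even_mul_pred_self i)
  have hpoly : (a - i) * (a - i - 1)
      = a * (a - 2 * k + 1) + 2 * i + i * (i - 1) + 2 * (a * (k - i - 1)) := by
    ring
  omega

lemma sum_range_mul_sub_eq_choose_three (k : ℕ) :
    ∑ i ∈ range k, i * (k - i) = (k + 1).choose 3 := by
  induction k with
  | zero => rfl
  | succ k ih =>
    have hsplit : ∀ i ∈ range (k + 1), i * (k + 1 - i) = i * (k - i) + i := fun i hi => by
      rw [mem_range] at hi
      rw [Nat.sub_add_comm (by omega), mul_add_one]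
    rw [sum_congr rfl hsplit, sum_add_distrib, sum_range_succ, Nat.sub_self, mul_zero, add_zero,
      ih, sum_range_id, ← Nat.choose_two_right, Nat.choose_succ_succ' (k + 1) 2, add_comm]

lemma Int.sum_ediv_two_of_even {ι : Type*} (s : Finset ι) (f : ι → ℤ)
    (hf : ∀ i ∈ s, Even (f i)) :
    (∑ i ∈ s, f i) / 2 = ∑ i ∈ s, f i / 2 := by
  refine Int.ediv_eq_of_eq_mul_left two_ne_zero ?_
  rw [sum_mul]
  exact sum_congr rfl fun i hi => (Int.ediv_mul_cancel (hf i hi).two_dvd).symm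

lemma zpow_sum₀ {G ι : Type*} [CommGroupWithZero G] {q : G} (hq : q ≠ 0) (s : Finset ι)
    (f : ι → ℤ) :
    q ^ (∑ i ∈ s, f i) = ∏ i ∈ s, q ^ f i := by
  classical
  induction s using Finset.induction with
  | empty => simp
  | insert a s h ih => rw [sum_insert h, prod_insert h, zpow_add₀ hq, ih]

end Exponents

section Weights

variable {q : ℝ}

noncomputable def colWeight (q : ℝ) (n k a : ℕ) : ℝ :=
  q ^ ((a : ℤ) * ((a : ℤ) - 2 * (k : ℤ) + 1) / 2) / (qfact q a * qfact q (n + k - a - 1))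

noncomputable def rowWeight (q : ℝ) (n i : ℕ) : ℝ := (-1) ^ i * q ^ i * qfact q n

lemma qbinom_entry_eq (hq : 0 < q) (hq1 : q ≠ 1) {n k a i : ℕ} (hik : i < k)
    (ha : a ≤ n + k - 1) :
    q ^ (((a : ℤ) - i) * ((a : ℤ) - i - 1) / 2) * qbinom q n ((a : ℤ) - i)
      = colWeight q n k a * (rowWeight q n i * (rowPoly q n k i).eval (q ^ a)) := by
  by_cases hrange : i ≤ a ∧ a ≤ n + i
  · obtain ⟨hia, han⟩ := hrange
    have hprod := congrArg₂ (· * ·) (qfact_mul_prod_range_pow_sub_pow (q := q) hia)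
      (qfact_mul_prod_Ioo_pow_sub_pow (q := q) han hik)
    rw [qbinom, if_pos (by omega), show ((a : ℤ) - i).toNat = a - i by omega,
      show n - (a - i) = n + i - a by omega, colWeight, rowWeight, eval_rowPoly,
      Int.sub_mul_sub_sub_one_ediv_two a i k, ← Int.natCast_choose_two,
      show (a : ℤ) * (k - i - 1) = ((a * (k - i - 1) : ℕ) : ℤ) by
        rw [Nat.cast_mul, show ((k - i - 1 : ℕ) : ℤ) = k - i - 1 by omega],
      zpow_add₀ hq.ne', zpow_add₀ hq.ne', zpow_add₀ hq.ne', zpow_natCast, zpow_natCast,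
      zpow_natCast]
    have hsign : ((-1 : ℝ) ^ i) * (-1) ^ i = 1 := by rw [← mul_pow]; norm_num
    have h₁ := qfact_ne_zero hq hq1 (a - i)
    have h₂ := qfact_ne_zero hq hq1 (n + i - a)
    have h₃ := qfact_ne_zero hq hq1 a
    have h₄ := qfact_ne_zero hq hq1 (n + k - a - 1)
    field_simp
    linear_combination (-(qfact q n * (-1) ^ i)) * hprod
      - (qfact q n * q ^ i.choose 2 * q ^ (a * (k - i - 1)) * qfact q a
        * qfact q (n + k - a - 1)) * hsign
  · have hzero : qbinom q n ((a : ℤ) - i) = 0 := by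
      rw [qbinom, if_neg (by omega)]
    have hpoly : (rowPoly q n k i).eval (q ^ a) = 0 := by
      rcases Nat.lt_or_ge a i with hai | hia
      · exact eval_rowPoly_pow_of_lt q n hai
      · rw [show a = n + (a - n) by omega]
        exact eval_rowPoly_pow_of_mem_Ioo q n (mem_Ioo.2 ⟨by omega, by omega⟩)
    rw [hzero, hpoly, mul_zero, mul_zero, mul_zero]

lemma rowWeight_mul_prod_Ioo {n k i : ℕ} (hik : i < k) :
    rowWeight q n i * ∏ s ∈ Ioo i k, (q ^ i - q ^ (n + s))
      = (-1) ^ i * q ^ (i * (k - i)) * qfact q (n + k - (i + 1)) := by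
  have h := qfact_mul_prod_Ioo_pow_sub_pow (q := q) (Nat.le_add_left i n) hik
  rw [Nat.add_sub_cancel] at h
  rw [rowWeight, mul_assoc, h, show i * (k - i) = i + i * (k - i - 1) by
    rw [← mul_one_add, Nat.add_sub_cancel' (by omega : 1 ≤ k - i)]]
  rw [show n + k - (i + 1) = n + k - i - 1 by omega, pow_add]
  ring

lemma prod_rowWeight_mul_prod_Ioo (n k : ℕ) :
    ∏ i : Fin k, rowWeight q n i * ∏ s ∈ Ioo (i : ℕ) k, (q ^ (i : ℕ) - q ^ (n + s))
      = (-1) ^ k.choose 2 * q ^ (k + 1).choose 3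
        * ∏ i : Fin k, qfact q (n + k - ((i : ℕ) + 1)) := by
  rw [prod_congr rfl fun i _ => rowWeight_mul_prod_Ioo i.isLt, prod_mul_distrib,
    prod_mul_distrib, prod_neg_one_pow_val, prod_pow_eq_pow_sum,
    Fin.sum_univ_eq_sum_range (fun i => i * (k - i)),
    sum_range_mul_sub_eq_choose_three]

lemma prod_colWeight (hq : q ≠ 0) (n k : ℕ) {ι : Type*} (s : Finset ι) (m : ι → ℕ) :
    ∏ j ∈ s, colWeight q n k (m j)
      = q ^ ((∑ j ∈ s, (m j : ℤ) * ((m j : ℤ) - 2 * (k : ℤ) + 1)) / 2)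
        / ∏ j ∈ s, (qfact q (m j) * qfact q (n + k - m j - 1)) := by
  rw [Int.sum_ediv_two_of_even _ _ fun j _ => Int.even_mul_sub_two_mul_add_one _ _, zpow_sum₀ hq,
    ← prod_div_distrib]
  rfl

end Weights

theorem qZ_product_form_general (n k : ℕ) (q : ℝ) (hq : 0 < q)
    (hq1 : q ≠ 1) (m : Fin k → ℕ) (hub : ∀ i, m i ≤ n + k - 1) :
    Matrix.det (Matrix.of fun i j : Fin k =>
        q ^ ((((m j : ℤ) - (i : ℤ)) * ((m j : ℤ) - (i : ℤ) - 1)) / 2)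
          * qbinom q n ((m j : ℤ) - (i : ℤ)))
      = q ^ ((((k + 1).choose 3 : ℤ))
            + (∑ i : Fin k, (m i : ℤ) * ((m i : ℤ) - 2 * (k : ℤ) + 1)) / 2)
        * (∏ p ∈ Finset.univ.filter (fun p : Fin k × Fin k => p.1 < p.2),
            (q ^ (m p.1) - q ^ (m p.2)))
        * ∏ i : Fin k,
            qfact q (n + k - ((i : ℕ) + 1)) / (qfact q (m i) * qfact q (n + k - m i - 1)) := by
  have hfactor : (of fun i j : Fin k =>
        q ^ ((((m j : ℤ) - (i : ℤ)) * ((m j : ℤ) - (i : ℤ) - 1)) / 2)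
          * qbinom q n ((m j : ℤ) - (i : ℤ)))
      = of fun i j : Fin k =>
          colWeight q n k (m j) * (rowWeight q n i * (rowPoly q n k i).eval (q ^ m j)) := by
    ext i j
    exact qbinom_entry_eq hq hq1 i.isLt (hub j)
  have hscale : det (of fun i j : Fin k =>
        colWeight q n k (m j) * (rowWeight q n i * (rowPoly q n k i).eval (q ^ m j)))
      = (∏ j, colWeight q n k (m j)) * ((∏ i : Fin k, rowWeight q n i)
        * det (of fun i j : Fin k => (rowPoly q n k i).eval (q ^ m j))) := by
    rw [← det_mul_column, ← det_mul_row]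
    rfl
  rw [hfactor, hscale, det_eval_rowPoly q n (pow_right_injective₀ hq hq1),
    ← mul_assoc (∏ i : Fin k, rowWeight q n i), ← prod_mul_distrib,
    prod_rowWeight_mul_prod_Ioo,
    det_vandermonde_eq_neg_one_pow_mul, prod_colWeight hq.ne', zpow_add₀ hq.ne', zpow_natCast,
    prod_div_distrib]
  have hden := prod_ne_zero_iff.2 fun j (_ : j ∈ univ) =>
    mul_ne_zero (qfact_ne_zero hq hq1 (m j)) (qfact_ne_zero hq hq1 (n + k - m j - 1))
  field_simp
  rw [← pow_mul, pow_mul', neg_one_sq, one_pow, one_mul]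

/-- Multiplicative form of the `q`-weighted Gessel–Viennot determinant for the cut hexagon. -/
theorem qZ_product_form (n k : ℕ) (hn : 0 < n) (hk : 0 < k) (q : ℝ) (hq : 0 < q)
    (hq1 : q ≠ 1) (m : Fin k → ℕ) (hm : StrictMono m) (hub : ∀ i, m i ≤ n + k - 1) :
    Matrix.det (Matrix.of fun i j : Fin k =>
        q ^ ((((m j : ℤ) - (i : ℤ)) * ((m j : ℤ) - (i : ℤ) - 1)) / 2)
          * qbinom q n ((m j : ℤ) - (i : ℤ)))
      = q ^ ((((k + 1).choose 3 : ℤ))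
            + (∑ i : Fin k, (m i : ℤ) * ((m i : ℤ) - 2 * (k : ℤ) + 1)) / 2)
        * (∏ p ∈ Finset.univ.filter (fun p : Fin k × Fin k => p.1 < p.2),
            (q ^ (m p.1) - q ^ (m p.2)))
        * ∏ i : Fin k,
            qfact q (n + k - ((i : ℕ) + 1)) / (qfact q (m i) * qfact q (n + k - m i - 1)) :=
  qZ_product_form_general n k q hq hq1 m hub
end

section
/- For a strictly increasing sequence of integers $0\le m_1<\cdots<m_k\le n+k-1$, the determinant $\det_{1\le i,j\le k}\binom{n}{m_j-i+1}$ equals $\prod_{1\le i<j\le k}(m_j-m_i)\,\prod_{i=1}^k \frac{(n+k-i)!}{m_i!\,(n+k-m_i-1)!}$. -/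
/-!
Write `N = n + k - 1`. Vandermonde's convolution
`(n + i).choose M = ∑ₛ i.choose s * n.choose (M - s)` says that the matrix `(n + i).choose (m j)`
is the unitriangular Pascal matrix times the given one, so the two have the same determinant.
Next, `(n + i).choose M = (n + i)! / (M! (N - M)!) * ∏_{n + i < u ≤ N} (u - M)`, so after pulling
out row and column factors what is left is `∏_{n + i < u ≤ N} (u - m j)`, a polynomial of degree
`k - 1 - i` in `m j`; reversing rows and columns turns it into a Vandermonde determinant.
-/

open Finset

/-- Binomial coefficient `n choose b` with an integer lower index, zero when `b < 0`
(and, by the usual convention of `Nat.choose`, zero when `b > n`). -/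
def intChoose (n : ℕ) (b : ℤ) : ℕ := if 0 ≤ b then n.choose b.toNat else 0

open Matrix Polynomial
open scoped Nat

lemma intChoose_natCast_sub (n M s : ℕ) :
    intChoose n ((M : ℤ) - s) = if s ≤ M then n.choose (M - s) else 0 := by
  unfold intChoose
  split_ifs
  · congr 1; omega
  · omega
  · omega
  · rfl

lemma add_choose_eq_sum_intChoose (n i M : ℕ) {k : ℕ} (hik : i < k) :
    (n + i).choose M = ∑ s ∈ range k, i.choose s * intChoose n ((M : ℤ) - s) := by
  have hM : (n + i).choose M = ∑ s ∈ range (M + 1), i.choose s * intChoose n ((M : ℤ) - s) := by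
    rw [add_comm, Nat.add_choose_eq, Nat.sum_antidiagonal_eq_sum_range_succ_mk]
    refine sum_congr rfl fun s hs => ?_
    rw [intChoose_natCast_sub, if_pos (Nat.lt_succ_iff.mp (mem_range.mp hs))]
  rw [hM]
  refine (sum_subset (range_subset_range.2 (Nat.le_add_right (M + 1) k)) ?_).trans
    (sum_subset (range_subset_range.2 (Nat.le_add_left k (M + 1))) ?_).symm
  · intro s _ hs
    rw [intChoose_natCast_sub, if_neg (by simp at hs; omega), mul_zero]
  · intro s _ hs
    rw [Nat.choose_eq_zero_of_lt (by simp at hs; omega), zero_mul]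

variable {R : Type*} [CommRing R]

lemma pascal_mul_intChoose (n k : ℕ) (m : Fin k → ℕ) :
    (of fun i s : Fin k => ((i : ℕ).choose s : R))
        * of (fun s j : Fin k => (intChoose n ((m j : ℤ) - (s : ℕ)) : R))
      = of fun i j : Fin k => ((n + (i : ℕ)).choose (m j) : R) := by
  ext i j
  rw [mul_apply, of_apply, add_choose_eq_sum_intChoose n i (m j) i.isLt, Nat.cast_sum,
    ← Fin.sum_univ_eq_sum_range (fun s => ((i.val.choose s * intChoose n (m j - s) : ℕ) : R))]
  simp

lemma det_pascal (k : ℕ) : det (of fun i j : Fin k => ((i : ℕ).choose j : R)) = 1 := by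
  rw [det_of_isLowerTriangular _ fun i j hij => by
    simp [Nat.choose_eq_zero_of_lt (show (i : ℕ) < j from hij)]]
  simp

lemma det_intChoose_eq_det_choose (n k : ℕ) (m : Fin k → ℕ) :
    det (of fun i j : Fin k => (intChoose n ((m j : ℤ) - i) : R))
      = det (of fun i j : Fin k => ((n + (i : ℕ)).choose (m j) : R)) := by
  rw [← pascal_mul_intChoose, det_mul, det_pascal, one_mul]

lemma choose_mul_factorial_mul_factorial_eq_prod (a d M : ℕ) (hM : M ≤ a + d) :
    (a.choose M : R) * M ! * (a + d - M)! = a ! * ∏ t ∈ range d, (((a + t + 1 : ℕ) : R) - M) := by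
  induction d with
  | zero =>
    simp only [add_zero, range_zero, prod_empty, mul_one] at hM ⊢
    rw [← Nat.cast_mul, ← Nat.cast_mul, Nat.choose_mul_factorial_mul_factorial hM]
  | succ d ih =>
    rcases Nat.lt_or_eq_of_le hM with hlt | rfl
    · have hle : M ≤ a + d := by omega
      rw [prod_range_succ, ← mul_assoc, ← ih hle, show a + (d + 1) - M = a + d - M + 1 by omega,
        Nat.factorial_succ]
      push_cast [Nat.cast_sub hle]
      ring
    · rw [Nat.choose_eq_zero_of_lt (by omega), prod_range_succ]
      push_cast
      ring

lemma prod_Ioi_eq_prod_filter_lt {α M : Type*} [Fintype α] [LinearOrder α]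
    [LocallyFiniteOrderTop α] [CommMonoid M] (f : α → α → M) :
    ∏ i, ∏ j ∈ Ioi i, f i j = ∏ p ∈ univ.filter (fun p : α × α => p.1 < p.2), f p.1 p.2 := by
  rw [prod_filter, Fintype.prod_prod_type]
  refine prod_congr rfl fun i _ => ?_
  rw [← prod_filter]
  congr 1
  ext j
  simp

lemma prod_Ioi_rev {M : Type*} [CommMonoid M] {k : ℕ} (f : Fin k → Fin k → M) :
    ∏ i : Fin k, ∏ j ∈ Ioi i, f (Fin.rev j) (Fin.rev i) = ∏ i : Fin k, ∏ j ∈ Ioi i, f i j := by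
  rw [prod_Ioi_eq_prod_filter_lt, prod_Ioi_eq_prod_filter_lt]
  refine prod_equiv ((Equiv.prodComm _ _).trans (Fin.revPerm.prodCongr Fin.revPerm)) ?_ ?_ <;>
    simp

lemma det_prod_Ico_sub (c : ℕ → R) {k : ℕ} (x : Fin k → R) :
    det (of fun i j : Fin k => ∏ t ∈ Ico ((i : ℕ) + 1) k, (c t - x j))
      = ∏ i : Fin k, ∏ j ∈ Ioi i, (x j - x i) := by
  nontriviality R
  set q : Fin k → R[X] := fun i => ∏ t ∈ Ico (k - i) k, (X + C (c t))
  have hdeg : ∀ i, (q i).natDegree = i := by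
    intro i
    simp only [q]
    rw [natDegree_prod_of_monic _ _ fun t _ => monic_X_add_C _]
    simp only [natDegree_X_add_C, sum_const, Nat.card_Ico, smul_eq_mul, mul_one]
    omega
  have hmonic : ∀ i, (q i).Monic := fun i => monic_prod_of_monic _ _ fun t _ => monic_X_add_C _
  -- Reversing rows and columns and evaluating at `-x` turns row `i` into a monic polynomial of
  -- degree `i`.
  calc det (of fun i j : Fin k => ∏ t ∈ Ico ((i : ℕ) + 1) k, (c t - x j))
      = det (of fun i j : Fin k => (q j).eval (-x (Fin.rev i)))ᵀ := by
        rw [← det_submatrix_equiv_self Fin.revPerm]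
        congr 1
        ext i j
        simp only [q, submatrix_apply, transpose_apply, of_apply, Fin.revPerm_apply, Fin.val_rev,
          eval_prod, eval_add, eval_X, eval_C, neg_add_eq_sub]
        rw [show k - ((i : ℕ) + 1) + 1 = k - i by omega]
    _ = ∏ i : Fin k, ∏ j ∈ Ioi i, (x (Fin.rev i) - x (Fin.rev j)) := by
        rw [det_transpose, ← det_eval_matrixOfPolynomials_eq_det_vandermonde _ q hdeg hmonic,
          det_vandermonde]
        simp only [sub_neg_eq_add, neg_add_eq_sub]
    _ = ∏ i : Fin k, ∏ j ∈ Ioi i, (x j - x i) := prod_Ioi_rev fun i j => x j - x i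

lemma choose_eq_factorial_mul_prod_Ico {K : Type*} [Field K] [CharZero K] (n k i M : ℕ)
    (hi : i < k) (hM : M ≤ n + k - 1) :
    ((n + i).choose M : K)
      = (n + i)! / (M ! * (n + k - M - 1)!) * ∏ t ∈ Ico (i + 1) k, (((n + t : ℕ) : K) - M) := by
  have h := choose_mul_factorial_mul_factorial_eq_prod (R := K) (n + i) (k - 1 - i) M (by omega)
  rw [show n + i + (k - 1 - i) - M = n + k - M - 1 by omega] at h
  rw [prod_Ico_eq_prod_range, show k - (i + 1) = k - 1 - i by omega,
    prod_congr rfl fun t _ => by rw [show n + (i + 1 + t) = n + i + t + 1 by omega],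
    div_mul_eq_mul_div, ← h]
  have hMfac : (M ! : K) ≠ 0 := Nat.cast_ne_zero.2 M.factorial_ne_zero
  have hNfac : ((n + k - M - 1)! : K) ≠ 0 := Nat.cast_ne_zero.2 (n + k - M - 1).factorial_ne_zero
  field_simp

theorem LGV_product_form_general (n k : ℕ)
    (m : Fin k → ℕ) (hub : ∀ i, m i ≤ n + k - 1) :
    Matrix.det (Matrix.of fun i j : Fin k => (intChoose n ((m j : ℤ) - (i : ℤ)) : ℝ))
      = (∏ p ∈ Finset.univ.filter (fun p : Fin k × Fin k => p.1 < p.2),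
          ((m p.2 : ℝ) - (m p.1 : ℝ)))
        * ∏ i : Fin k,
            (Nat.factorial (n + k - ((i : ℕ) + 1)) : ℝ)
              / ((Nat.factorial (m i) : ℝ) * (Nat.factorial (n + k - m i - 1) : ℝ)) := by
  have hentry : (of fun i j : Fin k => ((n + (i : ℕ)).choose (m j) : ℝ))
      = diagonal (fun i : Fin k => ((n + (i : ℕ))! : ℝ))
        * (of fun i j : Fin k => ∏ t ∈ Ico ((i : ℕ) + 1) k, (((n + t : ℕ) : ℝ) - m j))
        * diagonal (fun j => (((m j)! : ℝ) * (n + k - m j - 1)!)⁻¹) := by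
    ext i j
    rw [mul_diagonal, diagonal_mul, of_apply, of_apply,
        choose_eq_factorial_mul_prod_Ico n k i (m j) i.isLt (hub j)]
    ring
  have hrow : ∏ i : Fin k, ((n + (i : ℕ))! : ℝ) = ∏ i : Fin k, ((n + k - ((i : ℕ) + 1))! : ℝ) := by
    rw [← Equiv.prod_comp Fin.revPerm]
    refine prod_congr rfl fun i _ => ?_
    rw [Fin.revPerm_apply, Fin.val_rev, show n + (k - (i + 1)) = n + k - (i + 1) by omega]
  rw [det_intChoose_eq_det_choose, hentry, det_mul, det_mul, det_diagonal, det_diagonal,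
    det_prod_Ico_sub (fun t => ((n + t : ℕ) : ℝ)), prod_Ioi_eq_prod_filter_lt, hrow,
    prod_div_distrib, prod_inv_distrib]
  ring

/-- Multiplicative form of the Lindström–Gessel–Viennot determinant counting
nonintersecting lattice paths in the cut hexagon (uniform weights). -/
theorem LGV_product_form (n k : ℕ) (hn : 0 < n) (hk : 0 < k)
    (m : Fin k → ℕ) (hm : StrictMono m) (hub : ∀ i, m i ≤ n + k - 1) :
    Matrix.det (Matrix.of fun i j : Fin k => (intChoose n ((m j : ℤ) - (i : ℤ)) : ℝ))
      = (∏ p ∈ Finset.univ.filter (fun p : Fin k × Fin k => p.1 < p.2),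
          ((m p.2 : ℝ) - (m p.1 : ℝ)))
        * ∏ i : Fin k,
            (Nat.factorial (n + k - ((i : ℕ) + 1)) : ℝ)
              / ((Nat.factorial (m i) : ℝ) * (Nat.factorial (n + k - m i - 1) : ℝ)) :=
  LGV_product_form_general n k m hub
end

section
/- For integers $1\le m \le k+n$ and $1\le i\le k$, define $p^{(n)}_{i,m}=\binom{2n}{n+m-i}-\binom{2n}{n+m+i-1}$. Then for any strictly increasing sequence $1\le m_1<\cdots<m_k\le k+n$, $\det_{1\le i,j\le k}\big(p^{(n)}_{i,m_j}\big) = \prod_{i=1}^k \frac{(2n+2i-2)!}{(n+m_i+k-1)!\,(n-m_i+k)!}\;\prod_{1\le i<j\le k}(m_j-m_i)\;\prod_{1\le i\le j\le k}(m_i+m_j-1)$. -/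
open Finset

/-- The number `p^{(n)}_{i,m} = C(2n, n+m-i) - C(2n, n+m+i-1)` of lattice paths above a
floor (reflection principle), for `1 ≤ i`, `1 ≤ m`. -/
def pp (n i m : ℕ) : ℤ :=
  (intChoose (2 * n) ((n : ℤ) + m - i) : ℤ) - (intChoose (2 * n) ((n : ℤ) + m + i - 1) : ℤ)

/-!
Put `y = n + m`, `z = n + 1 - m` (so `y + z = 2n + 1`), `W = y z` and
`u_t(y) = y (y² - 1²) ⋯ (y² - t²)`. After multiplying column `j` by
`(n + m_j + k - 1)! (n + k - m_j)! / (2n)!`, the entry in row `t + 1` becomes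
`(u_t(y) - u_t(z)) ∏_{t < c < k} (W + c (2n + 1 + c))`. The first factor is antisymmetric in
`y ↔ z`, hence equals `(y - z) Q_t(W)` with `deg Q_t ≤ t`. Expanding `Q_t` in the Newton basis
at the nodes `-c (2n + 1 + c)` writes the matrix as a lower triangular matrix, with diagonal
`Q_t(-t (2n + 1 + t)) = (2n + 1) ⋯ (2n + 2t)`, times a Vandermonde matrix in the `W_j`; finally
`W_i - W_j = (m_j - m_i) (m_i + m_j - 1)`.
-/

open Polynomial
open scoped Nat

variable {R : Type*} [CommRing R]

theorem prod_filter_lt_eq_prod_Ioi {ι M : Type*} [Fintype ι] [LinearOrder ι]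
    [LocallyFiniteOrderTop ι] [CommMonoid M] (f : ι → ι → M) :
    ∏ p ∈ univ.filter (fun p : ι × ι => p.1 < p.2), f p.1 p.2
      = ∏ i, ∏ j ∈ Ioi i, f i j :=
  prod_finset_product' _ _ _ (by simp)

theorem prod_filter_le_eq_prod_mul_prod_Ioi {ι M : Type*} [Fintype ι] [LinearOrder ι]
    [LocallyFiniteOrderTop ι] [CommMonoid M] (f : ι → ι → M) :
    ∏ p ∈ univ.filter (fun p : ι × ι => p.1 ≤ p.2), f p.1 p.2
      = ∏ i, (f i i * ∏ j ∈ Ioi i, f i j) := by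
  rw [prod_finset_product' _ univ Ici (by simp)]
  exact prod_congr rfl fun i _ => by rw [Ici_eq_cons_Ioi, prod_cons]

section NewtonBasis

variable {k : ℕ}

theorem det_eval_monic_natDegree_rev (v : Fin k → R) (p : Fin k → R[X])
    (h_deg : ∀ j, (p j).natDegree = j.rev) (h_monic : ∀ j, (p j).Monic) :
    (Matrix.of fun i j => (p j).eval (v i)).det = ∏ i, ∏ j ∈ Ioi i, (v i - v j) := by
  -- `projVandermonde 1 v` has entries `v i ^ (k - 1 - j)`, so its determinant carries no sign.
  have hfactor : Matrix.of (fun i j => (p j).eval (v i))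
      = Matrix.projVandermonde 1 v * Matrix.of (fun r j => (p j).coeff r.rev) := by
    ext i j
    have hlt : (p j).natDegree < k := by rw [h_deg]; exact j.rev.isLt
    simp only [Matrix.of_apply, Matrix.mul_apply, Matrix.projVandermonde_apply, Pi.one_apply,
      one_pow, one_mul, eval_eq_sum_range' hlt,
      ← Fin.sum_univ_eq_sum_range (fun r => (p j).coeff r * v i ^ r)]
    exact (Fintype.sum_equiv Fin.revPerm _ _ (fun r => by simp [mul_comm])).symm
  rw [hfactor, Matrix.det_mul, Matrix.det_projVandermonde,
    Matrix.det_of_isLowerTriangular _ (fun r j hrj => ?_)]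
  · simp only [Matrix.of_apply, ← h_deg, (h_monic _).coeff_natDegree, prod_const_one, mul_one,
      Pi.one_apply, one_mul]
  · exact coeff_eq_zero_of_natDegree_lt (by rw [h_deg]; exact Fin.rev_lt_rev.2 hrj)

theorem exists_newton_expansion (b : ℕ → R) {d : ℕ} {Q : R[X]} (hQ : Q.natDegree ≤ d) :
    ∃ μ : ℕ → R, μ d = Q.eval (b d) ∧ (∀ s, d < s → μ s = 0) ∧
      Q = ∑ s ∈ range (d + 1), C (μ s) * ∏ c ∈ Ioc s d, (X - C (b c)) := by
  induction d generalizing Q with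
  | zero =>
    refine ⟨fun s => if s = 0 then Q.eval (b 0) else 0, by simp, fun s hs => by simp [hs.ne'],
      ?_⟩
    rw [eq_C_of_natDegree_le_zero hQ]
    simp
  | succ d ih =>
    set a := b (d + 1)
    obtain ⟨ν, -, hν, hexp⟩ := ih (Q := Q /ₘ (X - C a))
      (by nontriviality R; rw [natDegree_divByMonic _ (monic_X_sub_C a), natDegree_X_sub_C]; omega)
    refine ⟨Function.update ν (d + 1) (Q.eval a), Function.update_self .., fun s hs => ?_, ?_⟩
    · rw [Function.update_of_ne hs.ne', hν s (by omega)]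
    have hdiv : Q = (X - C a) * (Q /ₘ (X - C a)) + C (Q.eval a) := by
      rw [← modByMonic_X_sub_C_eq_C_eval, add_comm, modByMonic_add_div]
    rw [sum_range_succ, Function.update_self, Ioc_self, prod_empty, mul_one]
    conv_lhs => rw [hdiv, hexp, mul_sum]
    congr 1
    refine sum_congr rfl fun s hs => ?_
    have hs : s ≤ d := Nat.lt_succ_iff.1 (mem_range.1 hs)
    rw [Function.update_of_ne (by omega), prod_Ioc_succ_top hs]
    ring

theorem det_eval_mul_prod_X_sub_C (b : ℕ → R) (x : Fin k → R) (Q : Fin k → R[X])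
    (hQ : ∀ t, (Q t).natDegree ≤ t) :
    (Matrix.of fun t j => (Q t * ∏ c ∈ Ioc (t : ℕ) (k - 1), (X - C (b c))).eval (x j)).det
      = (∏ t, (Q t).eval (b t)) * ∏ i, ∏ j ∈ Ioi i, (x i - x j) := by
  nontriviality R
  set N : ℕ → R[X] := fun s => ∏ c ∈ Ioc s (k - 1), (X - C (b c))
  choose μ hμ_diag hμ_zero hμ using fun t : Fin k => exists_newton_expansion b (hQ t)
  have hexpand : ∀ t : Fin k, Q t * N t = ∑ s : Fin k, C (μ t s) * N s := by
    intro t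
    calc Q t * N t = ∑ s ∈ range (t + 1), C (μ t s) * N s := by
          rw [hμ t, sum_mul]
          refine sum_congr rfl fun s hs => ?_
          rw [mul_assoc, prod_Ioc_consecutive _ (Nat.lt_succ_iff.1 (mem_range.1 hs)) (by omega)]
      _ = ∑ s ∈ range k, C (μ t s) * N s :=
          sum_subset (range_subset_range.2 t.isLt) fun s _ hs => by
            rw [hμ_zero t s (by simpa using hs), C_0, zero_mul]
      _ = ∑ s : Fin k, C (μ t s) * N s := (Fin.sum_univ_eq_sum_range _ _).symm
  have hfactor : Matrix.of (fun t j => (Q t * N t).eval (x j))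
      = Matrix.of (fun (t s : Fin k) => μ t s)
        * (Matrix.of fun j (s : Fin k) => (N s).eval (x j)).transpose := by
    ext t j
    simp [Matrix.mul_apply, hexpand, eval_finsetSum]
  rw [hfactor, Matrix.det_mul, Matrix.det_transpose,
    Matrix.det_of_isLowerTriangular (Matrix.of fun (t s : Fin k) => μ t s) fun t s => hμ_zero t s,
    det_eval_monic_natDegree_rev x (fun s => N s) (fun s => ?_) (fun s => ?_)]
  · simp [hμ_diag]
  · rw [natDegree_prod_of_monic _ _ (fun c _ => monic_X_sub_C _)]
    simp only [natDegree_X_sub_C, sum_const, Nat.card_Ioc, smul_eq_mul, mul_one, Fin.val_rev]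
    omega
  · exact monic_prod_of_monic _ _ (fun c _ => monic_X_sub_C _)

end NewtonBasis

theorem ascPochhammer_eval_add (x : R) (a b : ℕ) :
    (ascPochhammer R (a + b)).eval x
      = (ascPochhammer R a).eval x * (ascPochhammer R b).eval (x + a) := by
  rw [← ascPochhammer_mul, eval_mul, eval_comp]
  simp

theorem ascPochhammer_eval_intCast_eq_zero {r : ℕ} {a : ℤ} (ha : a ≤ 0) (har : 0 < a + r) :
    (ascPochhammer R r).eval (a : R) = 0 := by
  lift -a to ℕ using (by omega) with j hj
  rw [show (a : R) = -(j : R) by rw [← Int.cast_natCast, hj]; push_cast; ring]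
  exact ascPochhammer_eval_neg_coe_nat_of_lt (by omega)

theorem ascPochhammer_eval_centered_succ (y : R) (t : ℕ) :
    (ascPochhammer R (2 * (t + 1) + 1)).eval (y - (t + 1 : ℕ))
      = (y - (t + 1)) * (y + (t + 1)) * (ascPochhammer R (2 * t + 1)).eval (y - t) := by
  rw [show 2 * (t + 1) + 1 = 2 * t + 1 + 1 + 1 by ring, ascPochhammer_succ_eval,
    ascPochhammer_succ_left, eval_mul, eval_comp]
  simp only [eval_X, eval_add, eval_one]
  push_cast
  rw [show y - (t + 1) + 1 = y - t by ring]
  ring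

theorem ascPochhammer_eval_mul_ascPochhammer_eval (y z : R) (t u : ℕ) :
    (ascPochhammer R u).eval (y + (t + 1)) * (ascPochhammer R u).eval (z + (t + 1))
      = ∏ c ∈ Ioc t (t + u), (y * z + c * (y + z + c)) := by
  induction u with
  | zero => simp
  | succ u ih =>
    rw [← add_assoc t, prod_Ioc_succ_top (by omega), ← ih, ascPochhammer_succ_eval,
      ascPochhammer_succ_eval]
    push_cast
    ring

/-- The recursion comes from `u_{t+1}(y) = (y² - (t + 1)²) u_t(y)` and `y² = S y - y z`, where
`u_t(y) = (ascPochhammer R (2t + 1)).eval (y - t)` and `y + z = S`; see `pochDiffQuot_eval`. -/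
noncomputable def pochDiffQuot (S : R) : ℕ → R[X] × R[X]
  | 0 => (1, C S)
  | t + 1 =>
    (C S * (pochDiffQuot S t).2 - (X + C (((t : R) + 1) ^ 2)) * (pochDiffQuot S t).1,
      (C (S ^ 2) - X - C (((t : R) + 1) ^ 2)) * (pochDiffQuot S t).2
        - C S * X * (pochDiffQuot S t).1)

theorem pochDiffQuot_natDegree_le (S : R) (t : ℕ) :
    (pochDiffQuot S t).1.natDegree ≤ t ∧ (pochDiffQuot S t).2.natDegree ≤ t := by
  induction t with
  | zero => simp [pochDiffQuot]
  | succ t ih =>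
    obtain ⟨h1, h2⟩ := ih
    simp only [pochDiffQuot]
    have step {p q : R[X]} (hp : p.natDegree ≤ 1) (hq : q.natDegree ≤ t) :
        (p * q).natDegree ≤ t + 1 :=
      (natDegree_mul_le_of_le hp hq).trans (by omega)
    exact ⟨(natDegree_sub_le_of_le (step (by compute_degree!) h2)
        (step (by compute_degree!) h1)).trans (max_self _).le,
      (natDegree_sub_le_of_le (step (by compute_degree!) h2)
        (step (by compute_degree!) h1)).trans (max_self _).le⟩

theorem pochDiffQuot_eval (y z : R) (t : ℕ) :
    (ascPochhammer R (2 * t + 1)).eval (y - t) - (ascPochhammer R (2 * t + 1)).eval (z - t)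
        = (y - z) * (pochDiffQuot (y + z) t).1.eval (y * z) ∧
      y * (ascPochhammer R (2 * t + 1)).eval (y - t)
          - z * (ascPochhammer R (2 * t + 1)).eval (z - t)
        = (y - z) * (pochDiffQuot (y + z) t).2.eval (y * z) := by
  induction t with
  | zero => simp [pochDiffQuot]; ring
  | succ t ih =>
    obtain ⟨hG, hH⟩ := ih
    simp only [ascPochhammer_eval_centered_succ, pochDiffQuot, eval_sub, eval_mul, eval_add,
      eval_C, eval_X]
    constructor
    · linear_combination (y + z) * hH - (y * z + ((t : R) + 1) ^ 2) * hG
    · linear_combination ((y + z) ^ 2 - y * z - ((t : R) + 1) ^ 2) * hH - (y + z) * (y * z) * hG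

theorem pochDiffQuot_eval_node [IsDomain R] (S : R) (t : ℕ) (hS : S + 2 * t ≠ 0) :
    (pochDiffQuot S t).1.eval (-(t * (S + t))) = (ascPochhammer R (2 * t)).eval S := by
  have h := (pochDiffQuot_eval (S + t) (-t) t).1
  rw [add_sub_cancel_right, show -(t : R) - t = -((2 * t : ℕ) : R) by push_cast; ring,
    ascPochhammer_eval_neg_coe_nat_of_lt (by omega), sub_zero, ascPochhammer_succ_eval,
    show S + t + -t = S by ring, show (S + t) * -t = -(t * (S + t)) by ring,
    show S + t - -t = S + 2 * t by ring] at h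
  push_cast at h
  exact mul_left_cancel₀ hS (h.symm.trans (mul_comm _ _))

theorem intChoose_mul_factorial_mul_factorial (N : ℕ) (b : ℤ) {r s A B : ℕ}
    (hA : (A : ℤ) = b + r) (hB : (B : ℤ) = N - b + s) {x x' : R} (hx : x = b + 1)
    (hx' : x' = N - b + 1) :
    (intChoose N b : R) * A ! * B !
      = N ! * (ascPochhammer R r).eval x * (ascPochhammer R s).eval x' := by
  subst hx hx'
  rcases lt_or_ge b 0 with hb | hb
  · have h0 := ascPochhammer_eval_intCast_eq_zero (R := R) (a := b + 1) (r := r)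
      (by omega) (by omega)
    push_cast at h0
    rw [intChoose, if_neg hb.not_ge, h0]
    simp
  rcases le_or_gt b N with hbN | hbN
  · lift b to ℕ using hb
    obtain rfl : A = b + r := by omega
    obtain rfl : B = (N - b) + s := by omega
    rw [intChoose, if_pos (Int.natCast_nonneg b), Int.toNat_natCast, Int.cast_natCast,
      ← factorial_mul_ascPochhammer, ← factorial_mul_ascPochhammer,
      ← Nat.choose_mul_factorial_mul_factorial (Nat.cast_le.1 hbN)]
    push_cast [Nat.cast_le.1 hbN]
    ring
  · have h0 := ascPochhammer_eval_intCast_eq_zero (R := R) (a := N - b + 1) (r := s)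
      (by omega) (by omega)
    push_cast at h0
    rw [intChoose, if_pos hb, Nat.choose_eq_zero_of_lt (by omega), h0]
    simp

theorem pp_mul_factorial_mul_factorial {n k t m : ℕ} (ht : t < k) (hm : m ≤ k + n) :
    (pp n (t + 1) m : R) * (n + m + k - 1)! * (n + k - m)!
      = (2 * n)! * (2 * m - 1) * ((pochDiffQuot (2 * n + 1 : R) t).1
          * ∏ c ∈ Ioc t (k - 1), (X - C (-(c * (2 * n + 1 + c) : R)))).eval
            (((n : R) + m) * (n + 1 - m)) := by
  obtain ⟨u, rfl⟩ : ∃ u, k = t + 1 + u := ⟨k - (t + 1), by omega⟩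
  set y : R := n + m
  set z : R := n + 1 - m
  have h₁ := intChoose_mul_factorial_mul_factorial (2 * n) ((n : ℤ) + m - (t + 1))
    (r := 2 * t + 1 + u) (s := u) (A := n + m + (t + 1 + u) - 1) (B := n + (t + 1 + u) - m)
    (x := y - t) (x' := z + (t + 1)) (by omega) (by omega) (by push_cast; ring)
    (by push_cast; ring)
  have h₂ := intChoose_mul_factorial_mul_factorial (2 * n) ((n : ℤ) + m + (t + 1) - 1)
    (r := u) (s := 2 * t + 1 + u) (A := n + m + (t + 1 + u) - 1) (B := n + (t + 1 + u) - m)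
    (x := y + (t + 1)) (x' := z - t) (by omega) (by omega) (by push_cast; ring)
    (by push_cast; ring)
  rw [ascPochhammer_eval_add,
    show y - t + (2 * t + 1 : ℕ) = y + (t + 1) by push_cast; ring] at h₁
  rw [ascPochhammer_eval_add,
    show z - t + (2 * t + 1 : ℕ) = z + (t + 1) by push_cast; ring] at h₂
  have hquot := (pochDiffQuot_eval y z t).1
  have hprod := ascPochhammer_eval_mul_ascPochhammer_eval y z t u
  rw [show y + z = 2 * n + 1 by ring] at hquot hprod
  rw [show y - z = 2 * m - 1 by ring] at hquot
  rw [show t + 1 + u - 1 = t + u by omega, pp]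
  simp only [eval_mul, eval_prod, eval_sub, eval_X, eval_C, sub_neg_eq_add, ← hprod]
  push_cast
  linear_combination h₁ - h₂ + (2 * n)! * (ascPochhammer R u).eval (y + (t + 1))
    * (ascPochhammer R u).eval (z + (t + 1)) * hquot

section Field

variable {K : Type*} [Field K] [CharZero K] {n k : ℕ} {m : Fin k → ℕ}

theorem pp_matrix_eq_mul_diagonal (hub : ∀ i, m i ≤ k + n) :
    Matrix.of (fun i j : Fin k => (pp n ((i : ℕ) + 1) (m j) : K))
      = Matrix.of (fun (t j : Fin k) => ((pochDiffQuot (2 * n + 1 : K) t).1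
          * ∏ c ∈ Ioc (t : ℕ) (k - 1), (X - C (-(c * (2 * n + 1 + c) : K)))).eval
            (((n : K) + m j) * (n + 1 - m j)))
        * Matrix.diagonal fun j =>
          (2 * n)! * (2 * m j - 1) / ((n + m j + k - 1)! * (n + k - m j)! : K) := by
  ext t j
  rw [Matrix.mul_diagonal, Matrix.of_apply, Matrix.of_apply, mul_div_assoc',
    eq_div_iff (by norm_cast; positivity)]
  linear_combination pp_mul_factorial_mul_factorial (R := K) t.isLt (hub j)

theorem det_pp_matrix (hub : ∀ i, m i ≤ k + n) :
    (Matrix.of fun i j : Fin k => (pp n ((i : ℕ) + 1) (m j) : K)).det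
      = (∏ i : Fin k, (2 * n + 2 * i)! / ((n + m i + k - 1)! * (n + k - m i)! : K)
          * (2 * m i - 1))
        * ∏ i, ∏ j ∈ Ioi i, (((m j : K) - m i) * (m i + m j - 1)) := by
  rw [pp_matrix_eq_mul_diagonal hub, Matrix.det_mul, Matrix.det_diagonal,
    det_eval_mul_prod_X_sub_C _ _ _ fun t => (pochDiffQuot_natDegree_le _ t).1]
  have hnode (t : Fin k) : (pochDiffQuot (2 * n + 1 : K) t).1.eval (-((t : K) * (2 * n + 1 + t)))
      = (ascPochhammer K (2 * t)).eval (2 * n + 1 : K) :=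
    pochDiffQuot_eval_node _ _ (by norm_cast; omega)
  have hdiff (i j : Fin k) : ((n : K) + m i) * (n + 1 - m i) - (n + m j) * (n + 1 - m j)
      = (m j - m i) * (m i + m j - 1) := by ring
  rw [mul_right_comm, ← prod_mul_distrib]
  simp only [hnode, hdiff]
  congr 1
  refine prod_congr rfl fun i _ => ?_
  rw [← factorial_mul_ascPochhammer K (2 * n) (2 * i)]
  push_cast
  ring

end Field

theorem halfcut_LGV_product_form_general (n k : ℕ)
    (m : Fin k → ℕ) (hub : ∀ i, m i ≤ k + n) :
    (Matrix.det (Matrix.of fun i j : Fin k => ((pp n ((i : ℕ) + 1) (m j) : ℝ))))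
      = (∏ i : Fin k,
            (Nat.factorial (2 * n + 2 * ((i : ℕ) + 1) - 2) : ℝ)
              / ((Nat.factorial (n + m i + k - 1) : ℝ) * (Nat.factorial (n + k - m i) : ℝ)))
        * (∏ p ∈ Finset.univ.filter (fun p : Fin k × Fin k => p.1 < p.2),
            ((m p.2 : ℝ) - (m p.1 : ℝ)))
        * ∏ p ∈ Finset.univ.filter (fun p : Fin k × Fin k => p.1 ≤ p.2),
            ((m p.1 : ℝ) + (m p.2 : ℝ) - 1) := by
  rw [det_pp_matrix hub, prod_filter_lt_eq_prod_Ioi fun i j => (m j : ℝ) - m i,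
    prod_filter_le_eq_prod_mul_prod_Ioi fun i j => (m i : ℝ) + m j - 1]
  simp only [prod_mul_distrib, show ∀ i : ℕ, 2 * n + 2 * (i + 1) - 2 = 2 * n + 2 * i by omega,
    ← two_mul]
  ring

/-- Factorized form of the LGV determinant for the half-cut hexagon with zig-zag
boundary: `det(p^{(n)}_{i, m_j}) = ∏_i (2n+2i-2)!/((n+m_i+k-1)!(n-m_i+k)!)
· ∏_{i<j}(m_j-m_i) · ∏_{i≤j}(m_i+m_j-1)`. -/
theorem halfcut_LGV_product_form (n k : ℕ) (hn : 0 < n) (hk : 0 < k)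
    (m : Fin k → ℕ) (hm : StrictMono m) (hlb : ∀ i, 1 ≤ m i) (hub : ∀ i, m i ≤ k + n) :
    (Matrix.det (Matrix.of fun i j : Fin k => ((pp n ((i : ℕ) + 1) (m j) : ℝ))))
      = (∏ i : Fin k,
            (Nat.factorial (2 * n + 2 * ((i : ℕ) + 1) - 2) : ℝ)
              / ((Nat.factorial (n + m i + k - 1) : ℝ) * (Nat.factorial (n + k - m i) : ℝ)))
        * (∏ p ∈ Finset.univ.filter (fun p : Fin k × Fin k => p.1 < p.2),
            ((m p.2 : ℝ) - (m p.1 : ℝ)))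
        * ∏ p ∈ Finset.univ.filter (fun p : Fin k × Fin k => p.1 ≤ p.2),
            ((m p.1 : ℝ) + (m p.2 : ℝ) - 1) :=
  halfcut_LGV_product_form_general n k m hub
end

section
/- For real $\beta>0$, $\int_0^1 \frac{\log(\beta+u)}{\sqrt{u(1-u)}}\,du = 2\pi\,\log\Big(\frac{\sqrt{\beta}+\sqrt{\beta+1}}{2}\Big) + \pi\log 1$, i.e. the integral equals $2\pi\log\big((\sqrt{\beta}+\sqrt{\beta+1})/2\big)$. -/
/-!
The substitution `u = (1 - cos t) / 2` turns `du / √(u(1-u))` into `dt` on `[0, π]`. With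
`a = (√β + √(β+1)) / 2` and `b = (√(β+1) - √β) / 2` one has
`β + (1 - cos t) / 2 = a² - 2ab cos t + b² = |a e^{it} - b|²`, and since `|b| ≤ a` the mean of
`log |z - b|` over the circle `|z| = a` is `log a`.
-/

open Real Set MeasureTheory

theorem image_one_sub_cos_div_two_Icc :
    (fun t => (1 - cos t) / 2) '' Icc 0 π = Icc 0 1 := by
  have hmono : MonotoneOn (fun t => (1 - cos t) / 2) (Icc 0 π) := fun x hx y hy hxy => by
    have := strictAntiOn_cos.antitoneOn hx hy hxy
    dsimp only
    linarith
  rw [(by fun_prop : Continuous fun t => (1 - cos t) / 2).continuousOn.image_Icc_of_monotoneOn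
    pi_pos.le hmono]
  norm_num

/-- No integrability is assumed: the change of variables holds for Bochner integrals, where
both sides vanish together when the integrands are not integrable. -/
theorem integral_div_sqrt_mul_one_sub (g : ℝ → ℝ) :
    ∫ u in (0 : ℝ)..1, g u / √(u * (1 - u)) = ∫ t in (0 : ℝ)..π, g ((1 - cos t) / 2) := by
  have hderiv : ∀ t ∈ Icc 0 π,
      HasDerivWithinAt (fun t => (1 - cos t) / 2) (sin t / 2) (Icc 0 π) t := fun t _ => by
    simpa using ((hasDerivAt_cos t).const_sub 1).div_const 2 |>.hasDerivWithinAt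
  have hinj : InjOn (fun t => (1 - cos t) / 2) (Icc 0 π) := fun x hx y hy hxy =>
    injOn_cos hx hy (by simpa using hxy)
  rw [intervalIntegral.integral_of_le zero_le_one, intervalIntegral.integral_of_le pi_pos.le,
    ← integral_Icc_eq_integral_Ioc, ← image_one_sub_cos_div_two_Icc,
    integral_image_eq_integral_abs_deriv_smul measurableSet_Icc hderiv hinj,
    integral_Icc_eq_integral_Ioo, integral_Ioc_eq_integral_Ioo]
  refine setIntegral_congr_fun measurableSet_Ioo fun t ht => ?_
  have hsin : 0 < sin t / 2 := half_pos (sin_pos_of_pos_of_lt_pi ht.1 ht.2)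
  have hsqrt : √((1 - cos t) / 2 * (1 - (1 - cos t) / 2)) = sin t / 2 := by
    rw [← sqrt_sq hsin.le]
    congr 1
    linear_combination (-1 / 4 : ℝ) * sin_sq_add_cos_sq t
  rw [smul_eq_mul, hsqrt, abs_of_pos hsin, mul_div_cancel₀ _ hsin.ne']

theorem norm_circleMap_zero_sub_ofReal_sq (a b t : ℝ) :
    ‖circleMap 0 a t - b‖ ^ 2 = a ^ 2 - 2 * a * b * cos t + b ^ 2 := by
  rw [Complex.sq_norm, Complex.normSq_apply]
  simp only [circleMap, zero_add, Complex.sub_re, Complex.sub_im, Complex.mul_re, Complex.mul_im,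
    Complex.ofReal_re, Complex.ofReal_im, Complex.exp_ofReal_mul_I_re,
    Complex.exp_ofReal_mul_I_im]
  linear_combination a ^ 2 * sin_sq_add_cos_sq t

theorem integral_comp_cos_zero_two_pi {f : ℝ → ℝ}
    (hf : IntervalIntegrable (fun t => f (cos t)) volume 0 (2 * π)) :
    ∫ t in (0 : ℝ)..2 * π, f (cos t) = 2 * ∫ t in (0 : ℝ)..π, f (cos t) := by
  have hsub : ∀ {x y}, x ∈ uIcc 0 (2 * π) → y ∈ uIcc 0 (2 * π) →
      IntervalIntegrable (fun t => f (cos t)) volume x y := fun hx hy =>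
    hf.mono_set (uIcc_subset_uIcc hx hy)
  have hπ : π ∈ uIcc 0 (2 * π) := by
    rw [uIcc_of_le (by positivity)]; constructor <;> linarith [pi_pos]
  have hreflect : ∫ t in π..2 * π, f (cos t) = ∫ t in (0 : ℝ)..π, f (cos t) := by
    have h := intervalIntegral.integral_comp_sub_left (fun t => f (cos t)) (2 * π) (a := 0) (b := π)
    rw [sub_zero, show 2 * π - π = π by ring] at h
    simpa only [cos_two_pi_sub] using h.symm
  rw [← intervalIntegral.integral_add_adjacent_intervals (hsub left_mem_uIcc hπ)
    (hsub hπ right_mem_uIcc), hreflect, two_mul]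

theorem integral_log_sq_sub_two_mul_mul_cos_add_sq {a b : ℝ} (hab : |b| ≤ |a|) :
    ∫ t in (0 : ℝ)..π, log (a ^ 2 - 2 * a * b * cos t + b ^ 2) = 2 * π * log a := by
  have hlog : ∀ t, log (a ^ 2 - 2 * a * b * cos t + b ^ 2) = 2 * log ‖circleMap 0 a t - b‖ :=
    fun t => by rw [← norm_circleMap_zero_sub_ofReal_sq, log_pow, Nat.cast_ofNat]
  have hint : IntervalIntegrable (fun t => log ‖circleMap 0 a t - b‖) volume 0 (2 * π) :=
    circleIntegrable_log_norm_sub_const a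
  have hmean : ∫ t in (0 : ℝ)..2 * π, log ‖circleMap 0 a t - b‖ = 2 * π * log a := by
    have h := circleAverage_log_norm_sub_const_of_mem_closedBall (c := 0) (a := b) (R := a)
      (by simpa using hab)
    rw [circleAverage_def, smul_eq_mul, inv_mul_eq_iff_eq_mul₀ (by positivity)] at h
    exact h
  have h2π := integral_comp_cos_zero_two_pi (f := fun x => log (a ^ 2 - 2 * a * b * x + b ^ 2))
    (by simpa only [hlog] using hint.const_mul 2)
  simp only [hlog, intervalIntegral.integral_const_mul, hmean] at h2π ⊢
  linarith

/-- `∫₀¹ log(β+u)/√(u(1-u)) du = 2π log((√β + √(β+1))/2)` for `β > 0`. -/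
theorem integral_log_over_sqrt (β : ℝ) (hβ : 0 < β) :
    ∫ u in (0:ℝ)..1, Real.log (β + u) / Real.sqrt (u * (1 - u))
      = 2 * π * Real.log ((Real.sqrt β + Real.sqrt (β + 1)) / 2) := by
  set a := (√β + √(β + 1)) / 2 with ha
  set b := (√(β + 1) - √β) / 2 with hb
  have hba : |b| ≤ |a| := abs_le_abs (by rw [ha, hb]; linarith [sqrt_nonneg β])
    (by rw [ha, hb]; linarith [sqrt_nonneg (β + 1)])
  have hfactor : ∀ t, β + (1 - cos t) / 2 = a ^ 2 - 2 * a * b * cos t + b ^ 2 := fun t => by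
    rw [ha, hb]
    linear_combination (-(1 + cos t) / 2) * sq_sqrt hβ.le -
      ((1 - cos t) / 2) * sq_sqrt (by linarith : 0 ≤ β + 1)
  rw [integral_div_sqrt_mul_one_sub (fun u => log (β + u))]
  simp only [hfactor]
  exact integral_log_sq_sub_two_mul_mul_cos_add_sq hba
end

section
/- For real numbers $\beta>0$ and $w>1$, $\int_0^1 \frac{du}{(w-u)(\beta+u)\sqrt{u(1-u)}} = \frac{\pi}{\beta+w}\Big(\frac{1}{\sqrt{\beta(\beta+1)}}+\frac{1}{\sqrt{w(w-1)}}\Big)$. -/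
/-!
By partial fractions, `1/((w-u)(β+u)) = (1/(β+w)) (1/(β+u) + 1/(w-u))`, and the substitution
`u ↦ 1-u` turns `w - u` into `(w-1) + u`. So everything reduces to
`∫₀¹ du/((c+u)√(u(1-u))) = π/√(c(c+1))` for `c > 0`, which follows from the explicit primitive
`arccos((c-(2c+1)u)/(c+u)) / √(c(c+1))`, whose arccos argument runs from `1` to `-1` on `[0,1]`.
This primitive stays continuous at both endpoints, where the integrand blows up; the integrand is
integrable there because it is a nonnegative derivative of a function continuous on `[0,1]`.
-/

open Real Set MeasureTheory intervalIntegral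

/-- With `u = sin²(t/2)` the integral becomes `∫ dt/(2c+1 - cos t)`, whose classical primitive is
`arccos(((2c+1) cos t - 1)/(2c+1 - cos t)) / √((2c+1)² - 1)`. -/
noncomputable def arccosPrimitive (c u : ℝ) : ℝ :=
  arccos ((c - (2 * c + 1) * u) / (c + u)) / √(c * (c + 1))

lemma sqrt_one_sub_sq_arccosPrimitive_arg {c u : ℝ} (hc : 0 < c) (hcu : 0 < c + u) :
    √(1 - ((c - (2 * c + 1) * u) / (c + u)) ^ 2)
      = 2 * √(c * (c + 1)) * √(u * (1 - u)) / (c + u) := by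
  have hsq : 1 - ((c - (2 * c + 1) * u) / (c + u)) ^ 2
      = 2 ^ 2 * (c * (c + 1)) * (u * (1 - u)) / (c + u) ^ 2 := by
    field_simp
    ring
  rw [hsq, sqrt_div' _ (by positivity), sqrt_sq hcu.le, sqrt_mul (by positivity),
    sqrt_mul (by positivity), sqrt_sq zero_le_two]

lemma hasDerivAt_arccosPrimitive {c u : ℝ} (hc : 0 < c) (hu : u ∈ Ioo (0 : ℝ) 1) :
    HasDerivAt (arccosPrimitive c) (1 / ((c + u) * √(u * (1 - u)))) u := by
  obtain ⟨hu₀, hu₁⟩ := hu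
  have hcu : 0 < c + u := by linarith
  have hroot := sqrt_one_sub_sq_arccosPrimitive_arg hc hcu
  have harg : 0 < 1 - ((c - (2 * c + 1) * u) / (c + u)) ^ 2 := by
    rw [← sqrt_pos, hroot]
    have : 0 < √(u * (1 - u)) := sqrt_pos.2 (by nlinarith)
    positivity
  have hmob : HasDerivAt (fun x => (c - (2 * c + 1) * x) / (c + x))
      ((-(2 * c + 1) * (c + u) - (c - (2 * c + 1) * u)) / (c + u) ^ 2) u :=
    (((hasDerivAt_id u).const_mul (2 * c + 1)).const_sub c |>.div
      ((hasDerivAt_id u).const_add c) hcu.ne').congr_deriv (by simp)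
  refine (((hasDerivAt_arccos (by nlinarith) (by nlinarith)).comp u hmob).div_const
    (√(c * (c + 1)))).congr_deriv ?_
  rw [hroot]
  field_simp
  rw [sq_sqrt (by positivity)]
  ring

lemma continuousOn_arccosPrimitive {c : ℝ} (hc : 0 < c) :
    ContinuousOn (arccosPrimitive c) (Icc 0 1) :=
  (continuous_arccos.comp_continuousOn <| ContinuousOn.div (by fun_prop) (by fun_prop)
    fun u hu => by linarith [hu.1]).div_const _

lemma arccosPrimitive_zero {c : ℝ} (hc : 0 < c) : arccosPrimitive c 0 = 0 := by
  simp [arccosPrimitive, hc.ne']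

lemma arccosPrimitive_one {c : ℝ} (hc : 0 < c) : arccosPrimitive c 1 = π / √(c * (c + 1)) := by
  have : (c - (2 * c + 1)) / (c + 1) = -1 := by
    field_simp
    ring
  simp [arccosPrimitive, this]

lemma intervalIntegrable_one_div_add_mul_sqrt {c : ℝ} (hc : 0 < c) :
    IntervalIntegrable (fun u => 1 / ((c + u) * √(u * (1 - u)))) volume 0 1 := by
  refine intervalIntegrable_deriv_of_nonneg (g := arccosPrimitive c) ?_ ?_ ?_
  · simpa using continuousOn_arccosPrimitive hc
  · simpa using fun u hu => hasDerivAt_arccosPrimitive hc hu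
  · simp only [zero_le_one, min_eq_left, max_eq_right, mem_Ioo, and_imp]
    intro u hu _
    have : 0 < c + u := by linarith
    positivity

theorem integral_one_div_add_mul_sqrt {c : ℝ} (hc : 0 < c) :
    ∫ u in (0 : ℝ)..1, 1 / ((c + u) * √(u * (1 - u))) = π / √(c * (c + 1)) := by
  rw [integral_eq_sub_of_hasDerivAt_of_le zero_le_one (continuousOn_arccosPrimitive hc)
    (fun u hu => hasDerivAt_arccosPrimitive hc hu) (intervalIntegrable_one_div_add_mul_sqrt hc),
    arccosPrimitive_one hc, arccosPrimitive_zero hc, sub_zero]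

/-- `∫₀¹ du/((w-u)(β+u)√(u(1-u))) = (π/(β+w))(1/√(β(β+1)) + 1/√(w(w-1)))`
for `β > 0` and `w > 1`. -/
theorem integral_rational_over_sqrt (β w : ℝ) (hβ : 0 < β) (hw : 1 < w) :
    ∫ u in (0:ℝ)..1, 1 / ((w - u) * (β + u) * Real.sqrt (u * (1 - u)))
      = π / (β + w) * (1 / Real.sqrt (β * (β + 1)) + 1 / Real.sqrt (w * (w - 1))) := by
  have hw₁ : 0 < w - 1 := by linarith
  set g : ℝ → ℝ → ℝ := fun c u => 1 / ((c + u) * √(u * (1 - u)))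
  have hpartial : EqOn (fun u => 1 / ((w - u) * (β + u) * √(u * (1 - u))))
      (fun u => (β + w)⁻¹ * (g β u + g (w - 1) (1 - u))) (uIcc 0 1) := by
    intro u hu
    rw [uIcc_of_le zero_le_one] at hu
    have : w - u ≠ 0 := by linarith [hu.2]
    have : β + u ≠ 0 := by linarith [hu.1]
    have : β + w ≠ 0 := by linarith
    simp only [g, sub_add_sub_cancel, sub_sub_cancel, mul_comm (1 - u) u]
    field_simp
    ring
  have hreflect : ∫ u in (0 : ℝ)..1, g (w - 1) (1 - u) = π / √(w * (w - 1)) := by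
    rw [integral_comp_sub_left (g (w - 1)), sub_self, sub_zero,
      integral_one_div_add_mul_sqrt hw₁, sub_add_cancel, mul_comm]
  have hreflect_int : IntervalIntegrable (fun u => g (w - 1) (1 - u)) volume 0 1 := by
    simpa [g] using ((intervalIntegrable_one_div_add_mul_sqrt hw₁).comp_sub_left 1).symm
  rw [integral_congr hpartial, intervalIntegral.integral_const_mul,
    integral_add (intervalIntegrable_one_div_add_mul_sqrt hβ) hreflect_int,
    integral_one_div_add_mul_sqrt hβ, hreflect]
  ring
end
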